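/- Let ν* ∈ P_+ be an equilibrium measure for G and let (a_k)_{k≥0} be a Leja sequence for G. If a subsequence (σ_{n_i}) of the measures (σ_n) converges pointwise on X to a measure σ, then σ is also an equilibrium measure for G, i.e. σ ∈ P and G(σ,σ) = Γ(G). -/

import Mathlib

/-!
Since `ν*` has full support, the first-order condition for `ν*` to minimise the energy on the
simplex, taken along the directions `δₓ - ν*`, says that the potential `G(·, ν*)` is constant,
equal to `Γ(G)`. Averaging the Leja inequality against `ν*` then gives
`∑_{j<k} G(a_k, a_j) ≤ k Γ(G)`, hence `n² G(σₙ, σₙ) ≤ n² Γ(G) + n (max_x G(x,x) - Γ(G))`.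
Along the subsequence this yields `G(σ, σ) ≤ Γ(G)`; as a limit of probability measures `σ ∈ P`,
so minimality of `ν*` gives equality.
-/

open Finset Filter Topology Matrix

section Energy

variable {X : Type*} [Fintype X]

theorem sum_sum_mul_mul_eq_dotProduct_mulVec (G : Matrix X X ℝ) (μ ν : X → ℝ) :
    ∑ x, ∑ y, μ x * G x y * ν y = μ ⬝ᵥ G *ᵥ ν := by
  simp only [dotProduct, mulVec, mul_sum, mul_assoc]

theorem Matrix.IsSymm.dotProduct_mulVec_comm {G : Matrix X X ℝ} (hG : G.IsSymm) (μ ν : X → ℝ) :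
    μ ⬝ᵥ G *ᵥ ν = ν ⬝ᵥ G *ᵥ μ := by
  rw [dotProduct_mulVec, ← mulVec_transpose, hG.eq, dotProduct_comm]

theorem Matrix.IsSymm.add_smul_dotProduct_mulVec_add_smul {G : Matrix X X ℝ} (hG : G.IsSymm)
    (ν d : X → ℝ) (t : ℝ) :
    (ν + t • d) ⬝ᵥ G *ᵥ (ν + t • d)
      = ν ⬝ᵥ G *ᵥ ν + t * (2 * (d ⬝ᵥ G *ᵥ ν)) + t ^ 2 * (d ⬝ᵥ G *ᵥ d) := by
  simp only [mulVec_add, mulVec_smul, dotProduct_add, add_dotProduct, dotProduct_smul,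
    smul_dotProduct, smul_eq_mul, hG.dotProduct_mulVec_comm ν d]
  ring

theorem eventually_add_smul_mem_stdSimplex {ν d : X → ℝ} (hν : ∀ x, 0 < ν x)
    (hν₁ : ∑ x, ν x = 1) (hd : ∑ x, d x = 0) :
    ∀ᶠ t in 𝓝 (0 : ℝ), ν + t • d ∈ stdSimplex ℝ X := by
  have hpos : ∀ᶠ t in 𝓝 (0 : ℝ), ∀ x, 0 < ν x + t * d x := by
    refine eventually_all.2 fun x => ?_
    have hcont : Continuous fun t : ℝ => ν x + t * d x := by fun_prop
    exact (hcont.tendsto' 0 (ν x) (by simp)).eventually (eventually_gt_nhds (hν x))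
  filter_upwards [hpos] with t ht
  refine ⟨fun x => (ht x).le, ?_⟩
  simp [sum_add_distrib, ← mul_sum, hd, hν₁]

theorem mulVec_apply_eq_of_isMinOn_stdSimplex {G : Matrix X X ℝ} (hG : G.IsSymm) {ν : X → ℝ}
    (hν : ∀ x, 0 < ν x) (hν₁ : ∑ x, ν x = 1)
    (hmin : IsMinOn (fun μ => μ ⬝ᵥ G *ᵥ μ) (stdSimplex ℝ X) ν) (x : X) :
    (G *ᵥ ν) x = ν ⬝ᵥ G *ᵥ ν := by
  classical
  set d := Pi.single x 1 - ν
  have hd : ∑ y, d y = 0 := by simp [d, sum_sub_distrib, hν₁]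
  have hloc : IsLocalMin (fun t : ℝ => (ν + t • d) ⬝ᵥ G *ᵥ (ν + t • d)) 0 := by
    filter_upwards [eventually_add_smul_mem_stdSimplex hν hν₁ hd] with t ht
    simpa using hmin ht
  have hderiv : HasDerivAt (fun t : ℝ => (ν + t • d) ⬝ᵥ G *ᵥ (ν + t • d))
      (2 * (d ⬝ᵥ G *ᵥ ν)) 0 := by
    simp only [hG.add_smul_dotProduct_mulVec_add_smul]
    simpa using (((hasDerivAt_id (0 : ℝ)).mul_const (2 * (d ⬝ᵥ G *ᵥ ν))).const_add
      (ν ⬝ᵥ G *ᵥ ν)).fun_add ((hasDerivAt_pow 2 (0 : ℝ)).mul_const (d ⬝ᵥ G *ᵥ d))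
  have h := hloc.hasDerivAt_eq_zero hderiv
  simp only [d, sub_dotProduct, single_one_dotProduct] at h
  linarith

section Empirical

variable [DecidableEq X]

/-- The paper's `σₙ`; `empiricalMeasure a 0 = 0` because `x / 0 = 0`. -/
noncomputable def empiricalMeasure (a : ℕ → X) (n : ℕ) : X → ℝ :=
  fun x => (∑ j ∈ range n, if a j = x then (1 : ℝ) else 0) / n

theorem dotProduct_empiricalMeasure (f : X → ℝ) (a : ℕ → X) (n : ℕ) :
    f ⬝ᵥ empiricalMeasure a n = (∑ j ∈ range n, f (a j)) / n := by
  simp only [dotProduct, empiricalMeasure, mul_div_assoc', ← sum_div, mul_sum, mul_ite, mul_one,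
    mul_zero]
  rw [sum_comm]
  simp

theorem empiricalMeasure_mem_stdSimplex (a : ℕ → X) {n : ℕ} (hn : n ≠ 0) :
    empiricalMeasure a n ∈ stdSimplex ℝ X := by
  refine ⟨fun x => by unfold empiricalMeasure; positivity, ?_⟩
  rw [← one_dotProduct, dotProduct_empiricalMeasure]
  simp [hn]

theorem empiricalMeasure_dotProduct_mulVec_self (G : Matrix X X ℝ) (a : ℕ → X) (n : ℕ) :
    empiricalMeasure a n ⬝ᵥ G *ᵥ empiricalMeasure a n
      = (∑ j ∈ range n, ∑ k ∈ range n, G (a j) (a k)) / n ^ 2 := by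
  rw [dotProduct_comm, dotProduct_empiricalMeasure]
  simp only [mulVec, dotProduct_empiricalMeasure, ← sum_div, div_div, sq]

end Empirical

def IsLejaSequence (G : Matrix X X ℝ) (a : ℕ → X) : Prop :=
  ∀ k, 1 ≤ k → ∀ x, ∑ j ∈ range k, G (a k) (a j) ≤ ∑ j ∈ range k, G x (a j)

namespace IsLejaSequence

variable {G : Matrix X X ℝ} {a : ℕ → X} {ν : X → ℝ} {c : ℝ}

theorem sum_range_le (ha : IsLejaSequence G a) (hν : ν ∈ stdSimplex ℝ X)
    (hpot : ∀ y, (ν ᵥ* G) y = c) (k : ℕ) :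
    ∑ j ∈ range k, G (a k) (a j) ≤ k * c := by
  rcases Nat.eq_zero_or_pos k with rfl | hk
  · simp
  calc ∑ j ∈ range k, G (a k) (a j)
      = ∑ x, ν x * ∑ j ∈ range k, G (a k) (a j) := by rw [← sum_mul, hν.2, one_mul]
    _ ≤ ∑ x, ν x * ∑ j ∈ range k, G x (a j) :=
        sum_le_sum fun x _ => mul_le_mul_of_nonneg_left (ha k hk x) (hν.1 x)
    _ = ∑ j ∈ range k, (ν ᵥ* G) (a j) := by
        simp only [mul_sum, vecMul, dotProduct]
        exact sum_comm
    _ = k * c := by simp [hpot]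

theorem sum_range_sum_range_le (ha : IsLejaSequence G a) (hG : G.IsSymm)
    (hν : ν ∈ stdSimplex ℝ X) (hpot : ∀ y, (G *ᵥ ν) y = c) {M : ℝ} (hM : ∀ x, G x x ≤ M)
    (n : ℕ) : ∑ j ∈ range n, ∑ k ∈ range n, G (a j) (a k) ≤ n ^ 2 * c + n * (M - c) := by
  have hpot' : ∀ y, (ν ᵥ* G) y = c := by rwa [← mulVec_transpose, hG.eq]
  induction n with
  | zero => simp
  | succ n ih =>
    have hstep : ∑ j ∈ range (n + 1), ∑ k ∈ range (n + 1), G (a j) (a k)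
        = ∑ j ∈ range n, ∑ k ∈ range n, G (a j) (a k)
          + 2 * ∑ j ∈ range n, G (a n) (a j) + G (a n) (a n) := by
      simp only [sum_range_succ, sum_add_distrib, hG.apply (a n)]
      ring
    rw [hstep]
    push_cast
    nlinarith [ha.sum_range_le hν hpot' n, hM (a n)]

theorem empiricalMeasure_dotProduct_mulVec_self_le [DecidableEq X] (ha : IsLejaSequence G a)
    (hG : G.IsSymm) (hν : ν ∈ stdSimplex ℝ X) (hpot : ∀ y, (G *ᵥ ν) y = c) {M : ℝ}
    (hM : ∀ x, G x x ≤ M) {n : ℕ} (hn : n ≠ 0) :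
    empiricalMeasure a n ⬝ᵥ G *ᵥ empiricalMeasure a n ≤ c + (M - c) / n := by
  have hn' : (0 : ℝ) < n := by positivity
  rw [empiricalMeasure_dotProduct_mulVec_self, div_le_iff₀ (by positivity)]
  calc _ ≤ (n : ℝ) ^ 2 * c + n * (M - c) := ha.sum_range_sum_range_le hG hν hpot hM n
    _ = (c + (M - c) / n) * n ^ 2 := by field_simp

end IsLejaSequence

end Energy

theorem leja_weak_star_limit_general {X : Type*} [Fintype X] [DecidableEq X]
    (G : X → X → ℝ) (hGsym : ∀ x y, G x y = G y x)
    (νs : X → ℝ) (hνs_pos : ∀ x, 0 < νs x) (hνs_sum : ∑ x, νs x = 1)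
    (hmin : ∀ ν : X → ℝ, (∀ x, 0 ≤ ν x) → ∑ x, ν x = 1 →
      ∑ x, ∑ y, νs x * G x y * νs y ≤ ∑ x, ∑ y, ν x * G x y * ν y)
    (a : ℕ → X)
    (hleja : ∀ k : ℕ, 1 ≤ k → ∀ x : X,
      ∑ j ∈ Finset.range k, G (a k) (a j) ≤ ∑ j ∈ Finset.range k, G x (a j))
    (φ : ℕ → ℕ) (hφ : StrictMono φ)
    (σ : X → ℝ)
    (hconv : ∀ x : X,
      Filter.Tendsto
        (fun i => (∑ j ∈ Finset.range (φ i), if a j = x then (1 : ℝ) else 0) / (φ i))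
        Filter.atTop (nhds (σ x))) :
    (∀ x, 0 ≤ σ x) ∧ (∑ x, σ x = 1) ∧
      ∑ x, ∑ y, σ x * G x y * σ y = ∑ x, ∑ y, νs x * G x y * νs y := by
  simp only [sum_sum_mul_mul_eq_dotProduct_mulVec G] at hmin ⊢
  have hG : Matrix.IsSymm G := .ext fun x y => hGsym y x
  have hνs : νs ∈ stdSimplex ℝ X := ⟨fun x => (hνs_pos x).le, hνs_sum⟩
  have hpot := mulVec_apply_eq_of_isMinOn_stdSimplex hG hνs_pos hνs_sum
    fun μ hμ => hmin μ hμ.1 hμ.2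
  obtain ⟨M, hM⟩ : ∃ M, ∀ x, G x x ≤ M := Finite.exists_le _
  have hσ_lim : Tendsto (fun i => empiricalMeasure a (φ i)) atTop (𝓝 σ) := tendsto_pi_nhds.2 hconv
  have hφ_ne : ∀ᶠ i in atTop, φ i ≠ 0 := hφ.tendsto_atTop.eventually_ne_atTop 0
  have hσ : σ ∈ stdSimplex ℝ X := (isClosed_stdSimplex ℝ X).mem_of_tendsto hσ_lim
    (hφ_ne.mono fun i hi => empiricalMeasure_mem_stdSimplex a hi)
  have ha : IsLejaSequence G a := hleja
  have hcont : Continuous fun μ : X → ℝ => μ ⬝ᵥ (G : Matrix X X ℝ) *ᵥ μ := by fun_prop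
  have hle : σ ⬝ᵥ G *ᵥ σ ≤ νs ⬝ᵥ G *ᵥ νs := by
    refine le_of_tendsto_of_tendsto ((hcont.tendsto σ).comp hσ_lim) ?_
      (hφ_ne.mono fun i hi => ha.empiricalMeasure_dotProduct_mulVec_self_le hG hνs hpot hM hi)
    simpa using
      ((tendsto_const_div_atTop_nhds_zero_nat (M - _)).comp hφ.tendsto_atTop).const_add _
  exact ⟨hσ.1, hσ.2, le_antisymm hle (hmin σ hσ.1 hσ.2)⟩

/-- If `ν* ∈ P₊` is an equilibrium measure for `G`, `(a_k)` is a Leja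
sequence for `G`, and a subsequence `σ_{n_i}` of the empirical measures `σₙ` converges
pointwise on `X` to a measure `σ`, then `σ` is also an equilibrium measure:
`σ ∈ P` and `G(σ,σ) = Γ(G) = G(ν*,ν*)`. -/
theorem leja_weak_star_limit {X : Type*} [Fintype X] [Nonempty X] [DecidableEq X]
    (G : X → X → ℝ) (hGsym : ∀ x y, G x y = G y x)
    (νs : X → ℝ) (hνs_pos : ∀ x, 0 < νs x) (hνs_sum : ∑ x, νs x = 1)
    (hmin : ∀ ν : X → ℝ, (∀ x, 0 ≤ ν x) → ∑ x, ν x = 1 →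
      ∑ x, ∑ y, νs x * G x y * νs y ≤ ∑ x, ∑ y, ν x * G x y * ν y)
    (a : ℕ → X)
    (hleja : ∀ k : ℕ, 1 ≤ k → ∀ x : X,
      ∑ j ∈ Finset.range k, G (a k) (a j) ≤ ∑ j ∈ Finset.range k, G x (a j))
    (φ : ℕ → ℕ) (hφ : StrictMono φ) (hφ1 : ∀ i, 1 ≤ φ i)
    (σ : X → ℝ)
    (hconv : ∀ x : X,
      Filter.Tendsto
        (fun i => (∑ j ∈ Finset.range (φ i), if a j = x then (1 : ℝ) else 0) / (φ i))
        Filter.atTop (nhds (σ x))) :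
    (∀ x, 0 ≤ σ x) ∧ (∑ x, σ x = 1) ∧
      ∑ x, ∑ y, σ x * G x y * σ y = ∑ x, ∑ y, νs x * G x y * νs y :=
  leja_weak_star_limit_general G hGsym νs hνs_pos hνs_sum hmin a hleja φ hφ σ hconv
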